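/- arXiv:1602.03041 — 5 statements merged into one kernel-verified Lean document; each statement's English description precedes it below -/
import Mathlib

section
/- Let H be a real Hilbert space, A and B bounded self-adjoint nonnegative operators on H, and λ > 0. If (uₙ) is a sequence in H such that the sequence fₙ := uₙ + λABuₙ is Cauchy, then (B^(1/2)uₙ) is a Cauchy sequence, where B^(1/2) is the nonnegative square root of B; moreover ‖B^(1/2)(uₙ − uₖ)‖ ≤ ‖B‖^(1/2) ‖fₙ − fₖ‖ for all n, k. -/
theorem sqrtB_cauchy_of_cauchy
    {H : Type*} [NormedAddCommGroup H] [InnerProductSpace ℝ H] [CompleteSpace H]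
    (A B S : H →L[ℝ] H) (hA : IsSelfAdjoint A) (hB : IsSelfAdjoint B)
    (hApos : ∀ u : H, 0 ≤ (inner ℝ (A u) u : ℝ))
    (hBpos : ∀ u : H, 0 ≤ (inner ℝ (B u) u : ℝ))
    -- S is the nonnegative self-adjoint square root of B
    (hS : IsSelfAdjoint S) (hSpos : ∀ u : H, 0 ≤ (inner ℝ (S u) u : ℝ))
    (hSsq : S ∘L S = B)
    (l : ℝ) (hl : 0 < l)
    (u f : ℕ → H) (hf : ∀ n, f n = u n + l • A (B (u n)))
    (hfc : CauchySeq f) :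
    CauchySeq (fun n => S (u n)) ∧
      ∀ n k : ℕ, ‖S (u n - u k)‖ ≤ Real.sqrt ‖B‖ * ‖f n - f k‖ := by
  have hSym : ∀ x y : H, (inner ℝ (S x) y : ℝ) = inner ℝ x (S y) :=
    fun x y => hS.isSymmetric x y
  have hBeq : ∀ x : H, B x = S (S x) := by
    intro x; rw [← hSsq]; rfl
  have hnormsq : ∀ x : H, (inner ℝ (B x) x : ℝ) = ‖S x‖ ^ 2 := by
    intro x
    rw [hBeq, hSym, real_inner_self_eq_norm_sq]
  have key : ∀ n k : ℕ, ‖S (u n - u k)‖ ≤ Real.sqrt ‖B‖ * ‖f n - f k‖ := by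
    intro n k
    set v := u n - u k with hv
    set g := f n - f k with hg
    have hgv : g = v + l • A (B v) := by
      simp only [hg, hv, hf, map_sub]
      module
    -- step 1 : ‖S v‖^2 ≤ ⟪B v, g⟫
    have h1 : ‖S v‖ ^ 2 ≤ (inner ℝ (B v) g : ℝ) := by
      rw [hgv, inner_add_right, real_inner_smul_right, ← hnormsq]
      have : (0:ℝ) ≤ inner ℝ (B v) (A (B v)) := by
        rw [real_inner_comm]; exact hApos (B v)
      nlinarith [hl.le]
    -- step 2 : ⟪B v, g⟫ ≤ ‖S v‖ * ‖S g‖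
    have h2 : (inner ℝ (B v) g : ℝ) ≤ ‖S v‖ * ‖S g‖ := by
      rw [hBeq, hSym]
      exact real_inner_le_norm _ _
    have hSvSg : ‖S v‖ ≤ ‖S g‖ := by
      rcases eq_or_lt_of_le (norm_nonneg (S v)) with h | h
      · rw [← h]; exact norm_nonneg _
      · nlinarith
    -- step 3 : ‖S g‖ ≤ √‖B‖ * ‖g‖
    have h3 : ‖S g‖ ≤ Real.sqrt ‖B‖ * ‖g‖ := by
      have hb : ‖S g‖ ^ 2 ≤ ‖B‖ * ‖g‖ ^ 2 := by
        rw [← hnormsq]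
        calc (inner ℝ (B g) g : ℝ) ≤ ‖B g‖ * ‖g‖ := real_inner_le_norm _ _
          _ ≤ (‖B‖ * ‖g‖) * ‖g‖ := by
              have := B.le_opNorm g
              nlinarith [norm_nonneg g]
          _ = ‖B‖ * ‖g‖ ^ 2 := by ring
      have := Real.sqrt_le_sqrt hb
      rwa [Real.sqrt_sq (norm_nonneg _), Real.sqrt_mul (norm_nonneg B),
        Real.sqrt_sq (norm_nonneg g)] at this
    exact hSvSg.trans h3
  refine ⟨?_, key⟩
  rw [Metric.cauchySeq_iff']
  intro ε hε
  have hC : (0:ℝ) < Real.sqrt ‖B‖ + 1 := by positivity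
  obtain ⟨N, hN⟩ := Metric.cauchySeq_iff'.mp hfc (ε / (Real.sqrt ‖B‖ + 1))
    (div_pos hε hC)
  refine ⟨N, fun n hn => ?_⟩
  have h1 := key n N
  have h2 := hN n hn
  rw [dist_eq_norm] at h2 ⊢
  have : ‖S (u n) - S (u N)‖ = ‖S (u n - u N)‖ := by rw [map_sub]
  rw [this]
  calc ‖S (u n - u N)‖ ≤ Real.sqrt ‖B‖ * ‖f n - f N‖ := h1
    _ ≤ (Real.sqrt ‖B‖ + 1) * ‖f n - f N‖ := by nlinarith [norm_nonneg (f n - f N), Real.sqrt_nonneg ‖B‖]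
    _ < (Real.sqrt ‖B‖ + 1) * (ε / (Real.sqrt ‖B‖ + 1)) := by
        exact mul_lt_mul_of_pos_left h2 hC
    _ = ε := by field_simp
end

section
/- Let H be a real Hilbert space, A and B bounded self-adjoint nonnegative operators on H, and λ > 0. Then the range of I + λAB is closed in H. -/
/-!
Pairing `g = w + λ A B w` with `B w` and using `⟪B w, w⟫ ≥ 0` gives
`λ ⟪A B w, B w⟫ ≤ ‖B‖ ‖g‖ ‖w‖`. For positive `A`, Cauchy–Schwarz for the form `⟪A ·, ·⟫` gives
`‖A v‖² ≤ ‖A‖ ⟪A v, v⟫`, so `(λ ‖A B w‖)² ≤ λ ‖A‖ ‖B‖ ‖g‖ ‖w‖`. Together with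
`‖w‖ ≤ ‖g‖ + λ ‖A B w‖` this yields `‖w‖ ≤ (2 + λ ‖A‖ ‖B‖) ‖g‖`: the operator `I + λ A B` is
bounded below, hence has closed range.
-/

theorem le_two_add_mul_of_le_add_of_sq_le {x y z c : ℝ} (hy : 0 ≤ y) (hc : 0 ≤ c)
    (hxz : x ≤ y + z) (hz : z ^ 2 ≤ c * y * x) : x ≤ (2 + c) * y := by
  by_contra! h
  have hx : 0 < x := lt_of_le_of_lt (by positivity) h
  have hxy : (x - y) ^ 2 ≤ z ^ 2 := pow_le_pow_left₀ (by nlinarith) (by linarith) 2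
  nlinarith [mul_lt_mul_of_pos_left h hx]

namespace ContinuousLinearMap.IsPositive

variable {H : Type*} [NormedAddCommGroup H] [InnerProductSpace ℝ H] {A : H →L[ℝ] H}

theorem inner_apply_sq_le (hA : A.IsPositive) (x y : H) :
    inner ℝ (A x) y ^ 2 ≤ inner ℝ (A x) x * inner ℝ (A y) y := by
  have hquad : ∀ t : ℝ,
      0 ≤ inner ℝ (A y) y * (t * t) + 2 * inner ℝ (A x) y * t + inner ℝ (A x) x := fun t => by
    have hyx : inner ℝ (A y) x = inner ℝ (A x) y := by
      rw [hA.inner_left_eq_inner_right, real_inner_comm]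
    have h := hA.inner_nonneg_left (x + t • y)
    simp only [map_add, map_smul, inner_add_left, inner_add_right, real_inner_smul_left,
      real_inner_smul_right, hyx] at h
    linarith
  have h := discrim_le_zero hquad
  rw [discrim] at h
  linarith

theorem norm_apply_sq_le (hA : A.IsPositive) (w : H) :
    ‖A w‖ ^ 2 ≤ ‖A‖ * inner ℝ (A w) w := by
  have hcs : ‖A w‖ ^ 2 * ‖A w‖ ^ 2 ≤ inner ℝ (A w) w * (‖A‖ * ‖A w‖ ^ 2) := by
    have h := hA.inner_apply_sq_le w (A w)
    rw [real_inner_self_eq_norm_sq, sq (‖A w‖ ^ 2)] at h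
    refine h.trans (mul_le_mul_of_nonneg_left ?_ (hA.inner_nonneg_left w))
    calc inner ℝ (A (A w)) (A w) ≤ ‖A (A w)‖ * ‖A w‖ := real_inner_le_norm _ _
      _ ≤ ‖A‖ * ‖A w‖ * ‖A w‖ := by gcongr; exact A.le_opNorm _
      _ = ‖A‖ * ‖A w‖ ^ 2 := by ring
  rcases (sq_nonneg ‖A w‖).eq_or_lt with h0 | hpos
  · rw [← h0]
    exact mul_nonneg (norm_nonneg A) (hA.inner_nonneg_left w)
  · nlinarith

theorem norm_le_mul_norm_add_smul_apply_apply (hA : A.IsPositive) {B : H →L[ℝ] H}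
    (hB : ∀ u, 0 ≤ inner ℝ (B u) u) {l : ℝ} (hl : 0 ≤ l) (w : H) :
    ‖w‖ ≤ (2 + l * ‖A‖ * ‖B‖) * ‖w + l • A (B w)‖ := by
  set g := w + l • A (B w)
  have hpair : l * inner ℝ (A (B w)) (B w) ≤ ‖g‖ * (‖B‖ * ‖w‖) :=
    calc l * inner ℝ (A (B w)) (B w) ≤ inner ℝ g (B w) := by
          rw [inner_add_left, real_inner_smul_left, real_inner_comm (B w) w]
          linarith [hB w]
      _ ≤ ‖g‖ * ‖B w‖ := real_inner_le_norm _ _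
      _ ≤ ‖g‖ * (‖B‖ * ‖w‖) := by gcongr; exact B.le_opNorm w
  have hsq : (l * ‖A (B w)‖) ^ 2 ≤ l * ‖A‖ * ‖B‖ * ‖g‖ * ‖w‖ :=
    calc (l * ‖A (B w)‖) ^ 2 = l ^ 2 * ‖A (B w)‖ ^ 2 := by ring
      _ ≤ l ^ 2 * (‖A‖ * inner ℝ (A (B w)) (B w)) := by gcongr; exact hA.norm_apply_sq_le _
      _ = l * ‖A‖ * (l * inner ℝ (A (B w)) (B w)) := by ring
      _ ≤ l * ‖A‖ * (‖g‖ * (‖B‖ * ‖w‖)) := by gcongr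
      _ = l * ‖A‖ * ‖B‖ * ‖g‖ * ‖w‖ := by ring
  have htri : ‖w‖ ≤ ‖g‖ + l * ‖A (B w)‖ :=
    calc ‖w‖ = ‖g - l • A (B w)‖ := by rw [add_sub_cancel_right]
      _ ≤ ‖g‖ + ‖l • A (B w)‖ := norm_sub_le _ _
      _ = ‖g‖ + l * ‖A (B w)‖ := by rw [norm_smul, Real.norm_of_nonneg hl]
  exact le_two_add_mul_of_le_add_of_sq_le (norm_nonneg g) (by positivity) htri hsq

end ContinuousLinearMap.IsPositive

theorem range_id_add_smul_AB_closed_general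
    {H : Type*} [NormedAddCommGroup H] [InnerProductSpace ℝ H] [CompleteSpace H]
    (A B : H →L[ℝ] H) (hA : IsSelfAdjoint A)
    (hApos : ∀ u : H, 0 ≤ (inner ℝ (A u) u : ℝ))
    (hBpos : ∀ u : H, 0 ≤ (inner ℝ (B u) u : ℝ))
    (l : ℝ) (hl : 0 < l) :
    IsClosed (Set.range fun u : H => u + l • A (B u)) := by
  have hApositive : A.IsPositive := (ContinuousLinearMap.isPositive_iff' A).2 ⟨hA, hApos⟩
  let T : H →L[ℝ] H := .id ℝ H + l • A.comp B
  have hT : AntilipschitzWith ⟨2 + l * ‖A‖ * ‖B‖, by positivity⟩ T :=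
    T.antilipschitz_of_bound (hApositive.norm_le_mul_norm_add_smul_apply_apply hBpos hl.le)
  exact hT.isClosed_range T.uniformContinuous

theorem range_id_add_smul_AB_closed
    {H : Type*} [NormedAddCommGroup H] [InnerProductSpace ℝ H] [CompleteSpace H]
    (A B : H →L[ℝ] H) (hA : IsSelfAdjoint A) (hB : IsSelfAdjoint B)
    (hApos : ∀ u : H, 0 ≤ (inner ℝ (A u) u : ℝ))
    (hBpos : ∀ u : H, 0 ≤ (inner ℝ (B u) u : ℝ))
    (l : ℝ) (hl : 0 < l) :
    IsClosed (Set.range fun u : H => u + l • A (B u)) :=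
  range_id_add_smul_AB_closed_general A B hA hApos hBpos l hl
end

section
/- Let H be a real Hilbert space, A and B bounded self-adjoint nonnegative operators on H, and λ > 0. Then I + λAB is invertible with bounded inverse, i.e. it is a homeomorphism of H onto itself. -/
/-!
Write `T = 1 + λAB`. Pairing `T u` with `B u` and using `⟪ABu, Bu⟫ ≥ 0` gives
`⟪Bu, u⟫ ≤ ‖Tu‖ ‖Bu‖`, while Cauchy–Schwarz for the positive form `⟪B·, ·⟫` gives
`‖Bu‖² ≤ ‖B‖ ⟪Bu, u⟫`; hence `‖Bu‖ ≤ ‖B‖ ‖Tu‖` and `‖u‖ ≤ ‖Tu‖ + λ‖A‖ ‖Bu‖` bounds `T`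
below. The adjoint `T† = 1 + λBA` is bounded below by the same argument, so `T` has closed
range with trivial orthogonal complement `ker T†`, and is therefore bijective.
-/

open scoped RealInnerProductSpace

namespace ContinuousLinearMap

section Real

variable {E : Type*} [NormedAddCommGroup E] [InnerProductSpace ℝ E]

theorem IsPositive.inner_sq_le {B : E →L[ℝ] E} (hB : B.IsPositive) (x y : E) :
    ⟪B x, y⟫ ^ 2 ≤ ⟪B x, x⟫ * ⟪B y, y⟫ := by
  have hquad : ∀ t : ℝ, 0 ≤ ⟪B y, y⟫ * (t * t) + 2 * ⟪B x, y⟫ * t + ⟪B x, x⟫ := by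
    intro t
    have hsymm : ⟪B y, x⟫ = ⟪B x, y⟫ := by
      rw [hB.inner_left_eq_inner_right, real_inner_comm]
    have h := hB.inner_nonneg_left (x + t • y)
    simp only [map_add, map_smul, inner_add_left, inner_add_right, real_inner_smul_left,
      real_inner_smul_right, hsymm] at h
    linarith
  have := discrim_le_zero hquad
  rw [discrim] at this
  linarith

theorem IsPositive.norm_apply_sq_le_s5 {B : E →L[ℝ] E} (hB : B.IsPositive) (u : E) :
    ‖B u‖ ^ 2 ≤ ‖B‖ * ⟪B u, u⟫ := by
  have hcs : ‖B u‖ ^ 2 * ‖B u‖ ^ 2 ≤ (‖B‖ * ⟪B u, u⟫) * ‖B u‖ ^ 2 :=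
    calc ‖B u‖ ^ 2 * ‖B u‖ ^ 2 = ⟪B u, B u⟫ ^ 2 := by rw [real_inner_self_eq_norm_sq]; ring
      _ ≤ ⟪B u, u⟫ * ⟪B (B u), B u⟫ := hB.inner_sq_le u (B u)
      _ ≤ ⟪B u, u⟫ * (‖B‖ * ‖B u‖ ^ 2) := by
          gcongr
          · exact hB.inner_nonneg_left u
          · calc ⟪B (B u), B u⟫ ≤ ‖B (B u)‖ * ‖B u‖ := real_inner_le_norm _ _
              _ ≤ ‖B‖ * ‖B u‖ * ‖B u‖ := by gcongr; exact B.le_opNorm _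
              _ = ‖B‖ * ‖B u‖ ^ 2 := by ring
      _ = (‖B‖ * ⟪B u, u⟫) * ‖B u‖ ^ 2 := by ring
  rcases (sq_nonneg ‖B u‖).eq_or_lt with h0 | hpos
  · rw [← h0]
    exact mul_nonneg (norm_nonneg B) (hB.inner_nonneg_left u)
  · exact le_of_mul_le_mul_right hcs hpos

variable {A B : E →L[ℝ] E} {l : ℝ}

theorem norm_apply_le_norm_one_add_smul_comp_apply (hA : ∀ v, 0 ≤ ⟪A v, v⟫)
    (hB : B.IsPositive) (hl : 0 ≤ l) (u : E) :
    ‖B u‖ ≤ ‖B‖ * ‖(1 + l • (A ∘L B)) u‖ := by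
  set T := 1 + l • (A ∘L B)
  have hpair : ⟪B u, u⟫ ≤ ⟪T u, B u⟫ := by
    have hABu := mul_nonneg hl (hA (B u))
    simp only [T, add_apply, one_apply_eq_self, smul_apply, comp_apply, inner_add_left,
      real_inner_smul_left, real_inner_comm u]
    linarith
  have hsq : ‖B u‖ * ‖B u‖ ≤ (‖B‖ * ‖T u‖) * ‖B u‖ :=
    calc ‖B u‖ * ‖B u‖ = ‖B u‖ ^ 2 := by ring
      _ ≤ ‖B‖ * ⟪B u, u⟫ := hB.norm_apply_sq_le_s5 u
      _ ≤ ‖B‖ * (‖T u‖ * ‖B u‖) := by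
          gcongr
          exact hpair.trans (real_inner_le_norm _ _)
      _ = (‖B‖ * ‖T u‖) * ‖B u‖ := by ring
  rcases (norm_nonneg (B u)).eq_or_lt with h0 | hpos
  · rw [← h0]
    positivity
  · exact le_of_mul_le_mul_right hsq hpos

theorem antilipschitz_one_add_smul_comp (hA : ∀ v, 0 ≤ ⟪A v, v⟫) (hB : B.IsPositive)
    (hl : 0 ≤ l) : ∃ K, AntilipschitzWith K ⇑(1 + l • (A ∘L B)) := by
  set T := 1 + l • (A ∘L B)
  refine ⟨⟨1 + l * ‖A‖ * ‖B‖, by positivity⟩, T.antilipschitz_of_bound fun u ↦ ?_⟩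
  have hu : u = T u - l • A (B u) := by
    simp only [T, add_apply, one_apply_eq_self, smul_apply, comp_apply, add_sub_cancel_right]
  calc ‖u‖ = ‖T u - l • A (B u)‖ := congrArg norm hu
    _ ≤ ‖T u‖ + l * (‖A‖ * ‖B u‖) := by
        grw [norm_sub_le, norm_smul, Real.norm_of_nonneg hl, A.le_opNorm]
    _ ≤ ‖T u‖ + l * (‖A‖ * (‖B‖ * ‖T u‖)) := by
        grw [norm_apply_le_norm_one_add_smul_comp_apply hA hB hl u]
    _ = (1 + l * ‖A‖ * ‖B‖) * ‖T u‖ := by ring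

variable [CompleteSpace E]

theorem adjoint_one_add_smul_comp (hA : IsSelfAdjoint A) (hB : IsSelfAdjoint B) :
    adjoint (1 + l • (A ∘L B)) = 1 + l • (B ∘L A) := by
  simp [adjoint_one, adjoint_comp, hA.adjoint_eq, hB.adjoint_eq]

end Real

theorem bijective_of_antilipschitz_of_injective_adjoint {𝕜 E F : Type*} [RCLike 𝕜]
    [NormedAddCommGroup E] [InnerProductSpace 𝕜 E] [CompleteSpace E]
    [NormedAddCommGroup F] [InnerProductSpace 𝕜 F] [CompleteSpace F]
    {T : E →L[𝕜] F} {K : NNReal} (hT : AntilipschitzWith K T)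
    (hT' : Function.Injective (adjoint T)) : Function.Bijective T := by
  refine (bijective_iff_dense_range_and_antilipschitz T).2 ⟨?_, K, hT⟩
  rw [Submodule.topologicalClosure_eq_top_iff, orthogonal_range]
  exact LinearMap.ker_eq_bot.2 hT'

end ContinuousLinearMap

open ContinuousLinearMap in
theorem id_add_smul_AB_homeomorphism
    {H : Type*} [NormedAddCommGroup H] [InnerProductSpace ℝ H] [CompleteSpace H]
    (A B : H →L[ℝ] H) (hA : IsSelfAdjoint A) (hB : IsSelfAdjoint B)
    (hApos : ∀ u : H, 0 ≤ (inner ℝ (A u) u : ℝ))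
    (hBpos : ∀ u : H, 0 ≤ (inner ℝ (B u) u : ℝ))
    (l : ℝ) (hl : 0 < l) :
    ∃ e : H ≃L[ℝ] H, (e : H →L[ℝ] H) = 1 + l • (A ∘L B) := by
  have hA' : A.IsPositive := (isPositive_iff' A).2 ⟨hA, hApos⟩
  have hB' : B.IsPositive := (isPositive_iff' B).2 ⟨hB, hBpos⟩
  obtain ⟨K, hT⟩ := antilipschitz_one_add_smul_comp hApos hB' hl.le
  obtain ⟨K', hT'⟩ := antilipschitz_one_add_smul_comp hBpos hA' hl.le
  have hbij : Function.Bijective ⇑(1 + l • (A ∘L B)) :=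
    bijective_of_antilipschitz_of_injective_adjoint hT
      (by rw [adjoint_one_add_smul_comp hA hB]; exact hT'.injective)
  exact ⟨.ofBijective _ (LinearMap.ker_eq_bot.2 hbij.1) (LinearMap.range_eq_top.2 hbij.2), rfl⟩
end

section
/- Let H be a Hilbert space and Λ₁, Λ₂ bounded self-adjoint nonnegative operators between H' := dual identified via Riesz map J : H → H', with Λ₁ : H' → H and Λ₂ : H → H' self-adjoint and nonnegative (i.e. ⟨ψ, Λ₁ψ⟩ ≥ 0 for ψ ∈ H' and ⟨Λ₂φ, φ⟩ ≥ 0 for φ ∈ H). Then A := Λ₁J and B := J⁻¹Λ₂ are bounded self-adjoint nonnegative operators on H, and T₁₂ := I + Λ₁Λ₂ = I + AB is a homeomorphism of H onto itself. -/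
/-!
With `A = Λ₁ J` and `B = J⁻¹ Λ₂` positive operators on `H`, the operator `T = 1 + A B` is bounded
below: for `f = T u` and `v = B u` we have `⟪A v, v⟫ ≤ ⟪f, v⟫` because `⟪u, B u⟫ ≥ 0`, and the
Cauchy–Schwarz inequality for the form `⟪A ·, ·⟫` gives `‖A v‖² ≤ ‖A‖ ⟪A v, v⟫`; together with
`u = f - A v` this yields `‖u‖ ≤ (2 + ‖A‖ ‖B‖) ‖f‖`. Hence `T` is injective with closed range.
Its adjoint `1 + B A` is bounded below by the same argument, so the range of `T` is also dense.
-/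

open RealInnerProductSpace

namespace ContinuousLinearMap

variable {E : Type*} [NormedAddCommGroup E] [InnerProductSpace ℝ E]

theorem IsPositive.real_inner_sq_le {T : E →L[ℝ] E} (hT : T.IsPositive) (x y : E) :
    ⟪T x, y⟫ ^ 2 ≤ ⟪T x, x⟫ * ⟪T y, y⟫ := by
  have hquad : ∀ t : ℝ, 0 ≤ ⟪T y, y⟫ * (t * t) + 2 * ⟪T x, y⟫ * t + ⟪T x, x⟫ := by
    intro t
    have h := hT.inner_nonneg_left (x + t • y)
    simp only [map_add, map_smul, inner_add_left, inner_add_right, real_inner_smul_left,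
      real_inner_smul_right, hT.inner_left_eq_inner_right y x, real_inner_comm (T x) y] at h
    linarith
  have := discrim_le_zero hquad
  rw [discrim] at this
  linarith

theorem IsPositive.norm_apply_sq_le_s8 {T : E →L[ℝ] E} (hT : T.IsPositive) (x : E) :
    ‖T x‖ ^ 2 ≤ ‖T‖ * ⟪T x, x⟫ := by
  rcases (norm_nonneg (T x)).eq_or_lt with h | h
  · rw [← h]
    simpa using mul_nonneg (norm_nonneg T) (hT.inner_nonneg_left x)
  have hcs : ‖T x‖ ^ 4 ≤ ⟪T x, x⟫ * ⟪T (T x), T x⟫ := by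
    simpa [real_inner_comm x, real_inner_self_eq_norm_sq, ← pow_mul] using
      hT.real_inner_sq_le x (T x)
  have hTT : ⟪T (T x), T x⟫ ≤ ‖T‖ * ‖T x‖ ^ 2 := by
    calc ⟪T (T x), T x⟫ ≤ ‖T (T x)‖ * ‖T x‖ := real_inner_le_norm _ _
      _ ≤ ‖T‖ * ‖T x‖ * ‖T x‖ := by gcongr; exact T.le_opNorm _
      _ = ‖T‖ * ‖T x‖ ^ 2 := by ring
  refine le_of_mul_le_mul_right ?_ (pow_pos h 2)
  calc ‖T x‖ ^ 2 * ‖T x‖ ^ 2 = ‖T x‖ ^ 4 := by ring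
    _ ≤ ⟪T x, x⟫ * (‖T‖ * ‖T x‖ ^ 2) := hcs.trans (by gcongr; exact hT.inner_nonneg_left x)
    _ = ‖T‖ * ⟪T x, x⟫ * ‖T x‖ ^ 2 := by ring

theorem norm_le_mul_norm_one_add_mul_apply {A B : E →L[ℝ] E} (hA : A.IsPositive)
    (hB : ∀ x, 0 ≤ ⟪B x, x⟫) (u : E) : ‖u‖ ≤ (2 + ‖A‖ * ‖B‖) * ‖(1 + A * B) u‖ := by
  set f := (1 + A * B) u
  set v := B u
  have hu : u = f - A v := by simp [f, v]
  have hAv_le : ⟪A v, v⟫ ≤ ⟪f, v⟫ := by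
    have : ⟪f, v⟫ = ⟪u, v⟫ + ⟪A v, v⟫ := by simp [f, v, inner_add_left]
    linarith [real_inner_comm u v ▸ hB u]
  have hAv : ‖A v‖ ^ 2 ≤ ‖A‖ * ‖B‖ * ‖f‖ * ‖u‖ :=
    calc ‖A v‖ ^ 2 ≤ ‖A‖ * ⟪A v, v⟫ := hA.norm_apply_sq_le_s8 v
      _ ≤ ‖A‖ * (‖f‖ * (‖B‖ * ‖u‖)) := by
        gcongr
        exact hAv_le.trans ((real_inner_le_norm f v).trans (by gcongr; exact B.le_opNorm u))
      _ = ‖A‖ * ‖B‖ * ‖f‖ * ‖u‖ := by ring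
  have hu_le : ‖u‖ ≤ ‖f‖ + ‖A v‖ := hu ▸ norm_sub_le f (A v)
  have hAB : 0 ≤ ‖A‖ * ‖B‖ := by positivity
  rcases le_or_gt ‖u‖ ‖f‖ with h | h
  · nlinarith [norm_nonneg f]
  -- `(‖u‖ - ‖f‖)² ≤ ‖A v‖² ≤ ‖A‖ ‖B‖ ‖f‖ ‖u‖` forces `‖u‖² ≤ (2 + ‖A‖ ‖B‖) ‖f‖ ‖u‖`
  have hsq : (‖u‖ - ‖f‖) ^ 2 ≤ ‖A v‖ ^ 2 := by gcongr; linarith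
  refine le_of_mul_le_mul_right ?_ ((norm_nonneg f).trans_lt h)
  nlinarith [sq_nonneg ‖f‖]

theorem antilipschitz_one_add_mul {A B : E →L[ℝ] E} (hA : A.IsPositive)
    (hB : ∀ x, 0 ≤ ⟪B x, x⟫) : ∃ c, AntilipschitzWith c ⇑(1 + A * B) :=
  ⟨_, (1 + A * B).antilipschitz_of_bound (K := ⟨2 + ‖A‖ * ‖B‖, by positivity⟩)
    (norm_le_mul_norm_one_add_mul_apply hA hB)⟩

theorem isUnit_one_add_mul [CompleteSpace E] {A B : E →L[ℝ] E} (hA : A.IsPositive)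
    (hB : B.IsPositive) : IsUnit (1 + A * B) := by
  rw [isUnit_iff_bijective, bijective_iff_dense_range_and_antilipschitz]
  refine ⟨?_, antilipschitz_one_add_mul hA hB.inner_nonneg_left⟩
  have hadj : star (1 + A * B) = 1 + B * A := by
    rw [star_add, star_one, star_mul, hA.isSelfAdjoint.star_eq, hB.isSelfAdjoint.star_eq]
  obtain ⟨c, hc⟩ := antilipschitz_one_add_mul hB hA.inner_nonneg_left
  rw [Submodule.topologicalClosure_eq_top_iff, orthogonal_range, ← star_eq_adjoint, hadj,
    LinearMap.ker_eq_bot]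
  exact hc.injective

section Duality

variable {E F : Type*} [NormedAddCommGroup E] [InnerProductSpace ℝ E]
  [NormedAddCommGroup F] [InnerProductSpace ℝ F]

theorem isPositive_comp_linearIsometryEquiv (J : E ≃ₗᵢ[ℝ] F) {Λ : F →L[ℝ] E}
    (hsa : ∀ ψ₁ ψ₂, ⟪J.symm ψ₁, Λ ψ₂⟫ = ⟪J.symm ψ₂, Λ ψ₁⟫) (hpos : ∀ ψ, 0 ≤ ⟪J.symm ψ, Λ ψ⟫) :
    (Λ ∘L (J.toContinuousLinearEquiv : E →L[ℝ] F)).IsPositive := by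
  refine (isPositive_iff _).2 ⟨fun x y => ?_, fun x => ?_⟩
  · simpa [real_inner_comm] using hsa (J y) (J x)
  · simpa [real_inner_comm] using hpos (J x)

theorem isPositive_linearIsometryEquiv_symm_comp (J : E ≃ₗᵢ[ℝ] F) {Λ : E →L[ℝ] F}
    (hsa : ∀ φ₁ φ₂, ⟪J.symm (Λ φ₁), φ₂⟫ = ⟪J.symm (Λ φ₂), φ₁⟫)
    (hpos : ∀ φ, 0 ≤ ⟪J.symm (Λ φ), φ⟫) :
    ((J.symm.toContinuousLinearEquiv : F →L[ℝ] E) ∘L Λ).IsPositive := by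
  refine (isPositive_iff _).2 ⟨fun x y => ?_, fun x => ?_⟩
  · simpa [real_inner_comm x] using hsa x y
  · simpa using hpos x

end Duality

end ContinuousLinearMap

theorem T12_homeomorphism_via_riesz_general
    {H H' : Type*} [NormedAddCommGroup H] [InnerProductSpace ℝ H] [CompleteSpace H]
    [NormedAddCommGroup H'] [InnerProductSpace ℝ H']
    -- J is the Riesz duality isomorphism; the duality pairing is ⟨ψ, φ⟩ = (J⁻¹ψ | φ)
    (J : H ≃ₗᵢ[ℝ] H')
    (Λ₁ : H' →L[ℝ] H) (Λ₂ : H →L[ℝ] H')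
    (hΛ₁sa : ∀ ψ₁ ψ₂ : H', (inner ℝ (J.symm ψ₁) (Λ₁ ψ₂) : ℝ) = inner ℝ (J.symm ψ₂) (Λ₁ ψ₁))
    (hΛ₁pos : ∀ ψ : H', 0 ≤ (inner ℝ (J.symm ψ) (Λ₁ ψ) : ℝ))
    (hΛ₂sa : ∀ φ₁ φ₂ : H, (inner ℝ (J.symm (Λ₂ φ₁)) φ₂ : ℝ) = inner ℝ (J.symm (Λ₂ φ₂)) φ₁)
    (hΛ₂pos : ∀ φ : H, 0 ≤ (inner ℝ (J.symm (Λ₂ φ)) φ : ℝ))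
    (A B : H →L[ℝ] H)
    (hAdef : A = Λ₁ ∘L (J.toContinuousLinearEquiv : H →L[ℝ] H'))
    (hBdef : B = (J.symm.toContinuousLinearEquiv : H' →L[ℝ] H) ∘L Λ₂) :
    IsSelfAdjoint A ∧ (∀ u : H, 0 ≤ (inner ℝ (A u) u : ℝ)) ∧
    IsSelfAdjoint B ∧ (∀ u : H, 0 ≤ (inner ℝ (B u) u : ℝ)) ∧
    (∀ φ : H, (A ∘L B) φ = Λ₁ (Λ₂ φ)) ∧
    ∃ e : H ≃L[ℝ] H, (e : H →L[ℝ] H) = 1 + A ∘L B := by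
  have hA : A.IsPositive :=
    hAdef ▸ ContinuousLinearMap.isPositive_comp_linearIsometryEquiv J hΛ₁sa hΛ₁pos
  have hB : B.IsPositive :=
    hBdef ▸ ContinuousLinearMap.isPositive_linearIsometryEquiv_symm_comp J hΛ₂sa hΛ₂pos
  have hT : IsUnit (1 + A * B) := ContinuousLinearMap.isUnit_one_add_mul hA hB
  exact ⟨hA.isSelfAdjoint, hA.inner_nonneg_left, hB.isSelfAdjoint, hB.inner_nonneg_left,
    fun φ => by simp [hAdef, hBdef], ContinuousLinearEquiv.unitsEquiv ℝ H hT.unit, rfl⟩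

theorem T12_homeomorphism_via_riesz
    {H H' : Type*} [NormedAddCommGroup H] [InnerProductSpace ℝ H] [CompleteSpace H]
    [NormedAddCommGroup H'] [InnerProductSpace ℝ H'] [CompleteSpace H']
    -- J is the Riesz duality isomorphism; the duality pairing is ⟨ψ, φ⟩ = (J⁻¹ψ | φ)
    (J : H ≃ₗᵢ[ℝ] H')
    (Λ₁ : H' →L[ℝ] H) (Λ₂ : H →L[ℝ] H')
    (hΛ₁sa : ∀ ψ₁ ψ₂ : H', (inner ℝ (J.symm ψ₁) (Λ₁ ψ₂) : ℝ) = inner ℝ (J.symm ψ₂) (Λ₁ ψ₁))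
    (hΛ₁pos : ∀ ψ : H', 0 ≤ (inner ℝ (J.symm ψ) (Λ₁ ψ) : ℝ))
    (hΛ₂sa : ∀ φ₁ φ₂ : H, (inner ℝ (J.symm (Λ₂ φ₁)) φ₂ : ℝ) = inner ℝ (J.symm (Λ₂ φ₂)) φ₁)
    (hΛ₂pos : ∀ φ : H, 0 ≤ (inner ℝ (J.symm (Λ₂ φ)) φ : ℝ))
    (A B : H →L[ℝ] H)
    (hAdef : A = Λ₁ ∘L (J.toContinuousLinearEquiv : H →L[ℝ] H'))
    (hBdef : B = (J.symm.toContinuousLinearEquiv : H' →L[ℝ] H) ∘L Λ₂) :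
    IsSelfAdjoint A ∧ (∀ u : H, 0 ≤ (inner ℝ (A u) u : ℝ)) ∧
    IsSelfAdjoint B ∧ (∀ u : H, 0 ≤ (inner ℝ (B u) u : ℝ)) ∧
    (∀ φ : H, (A ∘L B) φ = Λ₁ (Λ₂ φ)) ∧
    ∃ e : H ≃L[ℝ] H, (e : H →L[ℝ] H) = 1 + A ∘L B :=
  T12_homeomorphism_via_riesz_general J Λ₁ Λ₂ hΛ₁sa hΛ₁pos hΛ₂sa hΛ₂pos A B hAdef hBdef
end

section
/- Let H be a real Hilbert space, A, B bounded self-adjoint nonnegative operators, λ > 0. Then the adjoint of I + λAB is I + λBA, and its kernel is trivial; consequently (by the closed range theorem) R(I + λAB) = N(I + λBA)^⊥ = H. -/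
/-!
If `(1 + l A B) u = f` with `A, B` positive, pairing with `B u` gives `l ⟪A B u, B u⟫ ≤ ⟪f, B u⟫`,
and the Cauchy–Schwarz inequality `‖A w‖² ≤ ‖A‖ ⟪A w, w⟫` for the form of `A` turns this into
`‖u‖ ≤ (2 + l ‖A‖ ‖B‖) ‖f‖`. So `1 + l A B` is bounded below and, with `A, B` exchanged, its
adjoint `1 + l B A` is injective; hence its range is closed and dense.
-/

open ContinuousLinearMap
open scoped InnerProductSpace

namespace ContinuousLinearMap

variable {H : Type*} [NormedAddCommGroup H] [InnerProductSpace ℝ H]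

theorem IsPositive.norm_apply_sq_le_s17 {A : H →L[ℝ] H} (hA : A.IsPositive) (v : H) :
    ‖A v‖ ^ 2 ≤ ‖A‖ * ⟪A v, v⟫_ℝ := by
  rcases (norm_nonneg A).eq_or_lt with hA0 | hA0
  · simp [norm_eq_zero.mp hA0.symm]
  have hsymm : ⟪A (A v), v⟫_ℝ = ‖A v‖ ^ 2 := by
    rw [hA.inner_left_eq_inner_right, real_inner_self_eq_norm_sq]
  have hAAv : ⟪A (A v), A v⟫_ℝ ≤ ‖A‖ * ‖A v‖ ^ 2 :=
    calc ⟪A (A v), A v⟫_ℝ ≤ ‖A (A v)‖ * ‖A v‖ := real_inner_le_norm _ _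
      _ ≤ ‖A‖ * ‖A v‖ * ‖A v‖ := by gcongr; exact A.le_opNorm _
      _ = ‖A‖ * ‖A v‖ ^ 2 := by ring
  -- the form at `‖A‖ • v - A v` is at most `‖A‖ * (‖A‖ * ⟪A v, v⟫ - ‖A v‖ ^ 2)`
  have key := hA.inner_nonneg_left (‖A‖ • v - A v)
  simp only [map_sub, map_smul, inner_sub_left, inner_sub_right, real_inner_smul_left,
    real_inner_smul_right, hsymm, real_inner_self_eq_norm_sq] at key
  nlinarith

theorem norm_le_mul_norm_one_add_smul_comp_apply {A B : H →L[ℝ] H} (hA : A.IsPositive)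
    (hB : ∀ u, 0 ≤ ⟪B u, u⟫_ℝ) {l : ℝ} (hl : 0 ≤ l) (u : H) :
    ‖u‖ ≤ (2 + l * ‖A‖ * ‖B‖) * ‖(1 + l • (A ∘L B)) u‖ := by
  set f := (1 + l • (A ∘L B)) u
  set w := B u
  have hf : f = u + l • A w := rfl
  have hfw : l * ⟪A w, w⟫_ℝ ≤ ‖f‖ * (‖B‖ * ‖u‖) :=
    calc l * ⟪A w, w⟫_ℝ ≤ ⟪u, w⟫_ℝ + l * ⟪A w, w⟫_ℝ := by
          linarith [real_inner_comm u w ▸ hB u]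
      _ = ⟪f, w⟫_ℝ := by rw [hf, inner_add_left, real_inner_smul_left]
      _ ≤ ‖f‖ * ‖w‖ := real_inner_le_norm _ _
      _ ≤ ‖f‖ * (‖B‖ * ‖u‖) := by gcongr; exact B.le_opNorm u
  have hAw : (l * ‖A w‖) ^ 2 ≤ l * ‖A‖ * ‖B‖ * ‖f‖ * ‖u‖ :=
    calc (l * ‖A w‖) ^ 2 = l * (l * ‖A w‖ ^ 2) := by ring
      _ ≤ l * (l * (‖A‖ * ⟪A w, w⟫_ℝ)) := by gcongr; exact hA.norm_apply_sq_le_s17 w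
      _ = l * (‖A‖ * (l * ⟪A w, w⟫_ℝ)) := by ring
      _ ≤ l * (‖A‖ * (‖f‖ * (‖B‖ * ‖u‖))) := by gcongr
      _ = l * ‖A‖ * ‖B‖ * ‖f‖ * ‖u‖ := by ring
  have hu : ‖u‖ ≤ ‖f‖ + l * ‖A w‖ :=
    calc ‖u‖ = ‖f - l • A w‖ := by rw [hf, add_sub_cancel_right]
      _ ≤ ‖f‖ + ‖l • A w‖ := norm_sub_le _ _
      _ = ‖f‖ + l * ‖A w‖ := by rw [norm_smul, Real.norm_of_nonneg hl]
  -- `x² ≤ K z (z + x)` forces `x ≤ (K + 1) z`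
  have hK : 0 ≤ l * ‖A‖ * ‖B‖ := by positivity
  have hx : l * ‖A w‖ ≤ (l * ‖A‖ * ‖B‖ + 1) * ‖f‖ := by
    nlinarith [norm_nonneg f, norm_nonneg (A w), mul_nonneg hl (norm_nonneg (A w)),
      mul_nonneg hK (norm_nonneg f)]
  linarith

theorem surjective_of_antilipschitz_of_injective_adjoint {𝕜 E F : Type*} [RCLike 𝕜]
    [NormedAddCommGroup E] [InnerProductSpace 𝕜 E] [CompleteSpace E]
    [NormedAddCommGroup F] [InnerProductSpace 𝕜 F] [CompleteSpace F]
    {T : E →L[𝕜] F} {c : NNReal} (hT : AntilipschitzWith c T)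
    (hT' : Function.Injective (adjoint T)) : Function.Surjective T := by
  refine ((bijective_iff_dense_range_and_antilipschitz T).mpr ⟨?_, c, hT⟩).surjective
  rw [Submodule.topologicalClosure_eq_top_iff, orthogonal_range]
  exact LinearMap.ker_eq_bot.mpr hT'

end ContinuousLinearMap

theorem adjoint_and_surjectivity_of_id_add_smul_AB
    {H : Type*} [NormedAddCommGroup H] [InnerProductSpace ℝ H] [CompleteSpace H]
    (A B : H →L[ℝ] H) (hA : IsSelfAdjoint A) (hB : IsSelfAdjoint B)
    (hApos : ∀ u : H, 0 ≤ (inner ℝ (A u) u : ℝ))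
    (hBpos : ∀ u : H, 0 ≤ (inner ℝ (B u) u : ℝ))
    (l : ℝ) (hl : 0 < l) :
    ContinuousLinearMap.adjoint (1 + l • (A ∘L B)) = 1 + l • (B ∘L A) ∧
    (∀ u : H, (1 + l • (B ∘L A)) u = 0 → u = 0) ∧
    Function.Surjective (1 + l • (A ∘L B) : H →L[ℝ] H) := by
  have hA' : A.IsPositive := (isPositive_iff' A).mpr ⟨hA, hApos⟩
  have hB' : B.IsPositive := (isPositive_iff' B).mpr ⟨hB, hBpos⟩
  have hadj : adjoint (1 + l • (A ∘L B)) = 1 + l • (B ∘L A) := by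
    rw [map_add, ← star_eq_adjoint, star_one, map_smulₛₗ, adjoint_comp, hA.adjoint_eq,
      hB.adjoint_eq, starRingEnd_apply, star_trivial]
  have hker : ∀ u : H, (1 + l • (B ∘L A)) u = 0 → u = 0 := fun u hu =>
    norm_le_zero_iff.mp <| by
      simpa [hu] using norm_le_mul_norm_one_add_smul_comp_apply hB' hApos hl.le u
  have hanti := antilipschitz_of_bound (1 + l • (A ∘L B))
    (K := ⟨2 + l * ‖A‖ * ‖B‖, by positivity⟩)
    (norm_le_mul_norm_one_add_smul_comp_apply hA' hBpos hl.le)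
  refine ⟨hadj, hker, surjective_of_antilipschitz_of_injective_adjoint hanti ?_⟩
  rw [hadj, injective_iff_map_eq_zero]
  exact hker
end
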